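/- arXiv:hep-th/0508249 — 5 statements merged into one kernel-verified Lean document; each statement's English description precedes it below -/
import Mathlib

section
/- Let n be a positive natural number and let σ : Matrix n n ℝ → Matrix n n ℝ be an ℝ-linear involutive antiautomorphism of the matrix algebra: σ(AB) = σ(B)σ(A) for all A, B, σ(1) = 1, and σ ∘ σ = id. Then there exist open neighborhoods N ⊆ N' of the identity matrix such that every T ∈ N is invertible and admits exactly one factorization T = U·P with U, P ∈ N', where U is invertible and unitary with respect to σ (σ(U) = U⁻¹) and P is selfadjoint with respect to σ (σ(P) = P). -/
open Topology Filter

attribute [local instance] Matrix.linftyOpNormedRing Matrix.linftyOpNormedAlgebra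
open scoped Nat

set_option maxHeartbeats 2000000 in
/-- **Local polar decomposition with respect to an involutive antiautomorphism.**
Let `σ` be an `ℝ`-linear involutive antiautomorphism of the algebra of real `n × n`
matrices.  Then there are open neighborhoods `N ⊆ N'` of the identity matrix such
that every `T ∈ N` is invertible and factors uniquely as `T = U * P` with
`U, P ∈ N'`, `U` invertible and `σ`-unitary (`σ U = U⁻¹`), and `P` `σ`-selfadjoint
(`σ P = P`). -/
theorem stmt5 {n : ℕ} (hn : 0 < n)
    (σ : Matrix (Fin n) (Fin n) ℝ →ₗ[ℝ] Matrix (Fin n) (Fin n) ℝ)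
    (hmul : ∀ A B, σ (A * B) = σ B * σ A)
    (hone : σ 1 = 1)
    (hinvol : ∀ A, σ (σ A) = A) :
    ∃ N N' : Set (Matrix (Fin n) (Fin n) ℝ),
      IsOpen N ∧ IsOpen N' ∧ (1 : Matrix (Fin n) (Fin n) ℝ) ∈ N ∧
      (1 : Matrix (Fin n) (Fin n) ℝ) ∈ N' ∧ N ⊆ N' ∧
      ∀ T ∈ N, IsUnit T ∧
        ∃! UP : Matrix (Fin n) (Fin n) ℝ × Matrix (Fin n) (Fin n) ℝ,
          UP.1 ∈ N' ∧ UP.2 ∈ N' ∧ IsUnit UP.1 ∧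
          σ UP.1 * UP.1 = 1 ∧ UP.1 * σ UP.1 = 1 ∧
          σ UP.2 = UP.2 ∧ T = UP.1 * UP.2 := by
  haveI : Nonempty (Fin n) := ⟨⟨0, hn⟩⟩
  have hσc : Continuous ⇑σ := σ.continuous_of_finiteDimensional
  -- σ commutes with powers
  have hσpow : ∀ (x : Matrix (Fin n) (Fin n) ℝ) (k : ℕ), σ (x ^ k) = σ x ^ k := by
    intro x k
    induction k with
    | zero => simpa using hone
    | succ k ih => rw [pow_succ, hmul, ih, ← pow_succ']
  -- σ commutes with exp
  have hσexp : ∀ x : Matrix (Fin n) (Fin n) ℝ,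
      σ (NormedSpace.exp x) = NormedSpace.exp (σ x) := by
    intro x
    set ρ : Matrix (Fin n) (Fin n) ℝ →+* (Matrix (Fin n) (Fin n) ℝ)ᵐᵒᵖ :=
      { toFun := fun y => MulOpposite.op (σ y)
        map_one' := by show MulOpposite.op (σ 1) = 1; rw [hone]; rfl
        map_mul' := fun a b => by
          show MulOpposite.op (σ (a * b)) = MulOpposite.op (σ a) * MulOpposite.op (σ b)
          rw [hmul]; rfl
        map_zero' := by show MulOpposite.op (σ 0) = 0; rw [map_zero]; rfl
        map_add' := fun a b => by
          show MulOpposite.op (σ (a + b)) = MulOpposite.op (σ a) + MulOpposite.op (σ b)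
          rw [map_add]; rfl } with hρ
    have hc : Continuous ρ := MulOpposite.continuous_op.comp hσc
    have h := NormedSpace.map_exp ρ hc x
    rw [show ρ x = MulOpposite.op (σ x) from rfl, NormedSpace.exp_op] at h
    exact MulOpposite.op_injective h
  -- local inverse of exp
  have hde : HasStrictFDerivAt (NormedSpace.exp)
      ((ContinuousLinearEquiv.refl ℝ (Matrix (Fin n) (Fin n) ℝ) :
        Matrix (Fin n) (Fin n) ℝ ≃L[ℝ] Matrix (Fin n) (Fin n) ℝ) :
        Matrix (Fin n) (Fin n) ℝ →L[ℝ] Matrix (Fin n) (Fin n) ℝ)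
      (0 : Matrix (Fin n) (Fin n) ℝ) := by
    have h := (hasStrictFDerivAt_exp_zero (𝕂 := ℝ) (𝔸 := Matrix (Fin n) (Fin n) ℝ))
    simp only [ContinuousLinearMap.one_def] at h
    exact h
  set Φ := hde.toOpenPartialHomeomorph (NormedSpace.exp) with hΦdef
  have hΦcoe : ⇑Φ = NormedSpace.exp := hde.toOpenPartialHomeomorph_coe
  have h0src : (0 : Matrix (Fin n) (Fin n) ℝ) ∈ Φ.source :=
    hde.mem_toOpenPartialHomeomorph_source
  have h1tgt : (1 : Matrix (Fin n) (Fin n) ℝ) ∈ Φ.target := by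
    have := Φ.map_source h0src
    rwa [hΦcoe, NormedSpace.exp_zero] at this
  have hΦs1 : Φ.symm 1 = 0 := by
    have := Φ.left_inv h0src
    rwa [hΦcoe, NormedSpace.exp_zero] at this
  -- local injectivity of squaring
  set e : Matrix (Fin n) (Fin n) ℝ ≃L[ℝ] Matrix (Fin n) (Fin n) ℝ :=
    (LinearEquiv.smulOfNeZero ℝ _ 2 two_ne_zero).toContinuousLinearEquiv with he
  have hsq : HasStrictFDerivAt (fun x : Matrix (Fin n) (Fin n) ℝ => x * x)
      (e : Matrix (Fin n) (Fin n) ℝ →L[ℝ] Matrix (Fin n) (Fin n) ℝ)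
      (1 : Matrix (Fin n) (Fin n) ℝ) := by
    have h := (hasStrictFDerivAt_id (𝕜 := ℝ) (1 : Matrix (Fin n) (Fin n) ℝ)).mul' (𝕜 := ℝ)
      (hasStrictFDerivAt_id (1 : Matrix (Fin n) (Fin n) ℝ))
    refine h.congr_fderiv ?_
    symm
    ext x
    simp [he, LinearEquiv.smulOfNeZero, LinearEquiv.smulOfUnit,
      DistribMulAction.toLinearEquiv, Matrix.smul_apply, two_smul]
    change _ = ((1 * x + x * 1 : Matrix (Fin n) (Fin n) ℝ)) _ _
    simp; ring
  set Ψ := hsq.toOpenPartialHomeomorph _ with hΨdef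
  have hΨcoe : ⇑Ψ = fun x : Matrix (Fin n) (Fin n) ℝ => x * x :=
    hsq.toOpenPartialHomeomorph_coe
  have h1Ψ : (1 : Matrix (Fin n) (Fin n) ℝ) ∈ Ψ.source :=
    hsq.mem_toOpenPartialHomeomorph_source
  -- σ-invariant neighborhood of 0
  set W : Set (Matrix (Fin n) (Fin n) ℝ) := Φ.source ∩ ⇑σ ⁻¹' Φ.source with hW
  have hWopen : IsOpen W := Φ.open_source.inter (Φ.open_source.preimage hσc)
  have hW0 : (0 : Matrix (Fin n) (Fin n) ℝ) ∈ W := by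
    constructor
    · exact h0src
    · show σ 0 ∈ Φ.source
      rw [map_zero]; exact h0src
  -- N'
  set N' : Set (Matrix (Fin n) (Fin n) ℝ) := Ψ.source ∩ {x | IsUnit x} with hN'
  have hN'open : IsOpen N' := Ψ.open_source.inter Units.isOpen
  have h1N' : (1 : Matrix (Fin n) (Fin n) ℝ) ∈ N' := ⟨h1Ψ, isUnit_one⟩
  -- the P and U maps
  set Pf : Matrix (Fin n) (Fin n) ℝ → Matrix (Fin n) (Fin n) ℝ :=
    fun T => NormedSpace.exp ((2⁻¹ : ℝ) • Φ.symm (σ T * T)) with hPf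
  set Uf : Matrix (Fin n) (Fin n) ℝ → Matrix (Fin n) (Fin n) ℝ :=
    fun T => T * Ring.inverse (Pf T) with hUf
  have hPf1 : Pf 1 = 1 := by
    simp only [hPf]
    rw [hone, one_mul, hΦs1, smul_zero, NormedSpace.exp_zero]
  have hUf1 : Uf 1 = 1 := by
    simp only [hUf, hPf1, Ring.inverse_one, one_mul]
  -- continuity facts at 1
  have cS : ContinuousAt (fun T => σ T * T) (1 : Matrix (Fin n) (Fin n) ℝ) :=
    (hσc.continuousAt.mul continuousAt_id)
  have hS1 : (fun T : Matrix (Fin n) (Fin n) ℝ => σ T * T) 1 = 1 := by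
    simp [hone]
  have cL : ContinuousAt (⇑Φ.symm) (1 : Matrix (Fin n) (Fin n) ℝ) := by
    apply Φ.symm.continuousAt
    rwa [OpenPartialHomeomorph.symm_source]
  have cLS : ContinuousAt (fun T => Φ.symm (σ T * T)) (1 : Matrix (Fin n) (Fin n) ℝ) := by
    have h : ContinuousAt (⇑Φ.symm) ((1 : Matrix (Fin n) (Fin n) ℝ)) := cL
    have h2 : ContinuousAt (⇑Φ.symm) (σ (1 : Matrix (Fin n) (Fin n) ℝ) * 1) := by
      rwa [hone, one_mul]
    exact ContinuousAt.comp (hf := cS) h2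
  have cPf : ContinuousAt Pf (1 : Matrix (Fin n) (Fin n) ℝ) := by
    refine ContinuousAt.comp ?_ (show ContinuousAt (fun T => (2⁻¹ : ℝ) • Φ.symm (σ T * T)) 1 from cLS.const_smul (2⁻¹ : ℝ))
    exact NormedSpace.exp_continuous.continuousAt
  have cUf : ContinuousAt Uf (1 : Matrix (Fin n) (Fin n) ℝ) := by
    have cRinv : ContinuousAt (Ring.inverse : Matrix (Fin n) (Fin n) ℝ → _) (Pf 1) := by
      rw [hPf1]
      exact NormedRing.inverse_continuousAt (1 : (Matrix (Fin n) (Fin n) ℝ)ˣ)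
    exact continuousAt_id.mul (cRinv.comp cPf)
  -- good neighborhood
  have hmemN : {T : Matrix (Fin n) (Fin n) ℝ | T ∈ N' ∧ σ T * T ∈ Φ.target ∧
      Φ.symm (σ T * T) ∈ W ∧ Pf T ∈ N' ∧ Uf T ∈ N'} ∈ 𝓝 (1 : Matrix (Fin n) (Fin n) ℝ) := by
    have m1 : N' ∈ 𝓝 (1 : Matrix (Fin n) (Fin n) ℝ) := hN'open.mem_nhds h1N'
    have m2 : (fun T : Matrix (Fin n) (Fin n) ℝ => σ T * T) ⁻¹' Φ.target
        ∈ 𝓝 (1 : Matrix (Fin n) (Fin n) ℝ) := by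
      apply cS.preimage_mem_nhds
      rw [show σ (1 : Matrix (Fin n) (Fin n) ℝ) * 1 = 1 by rw [hone, one_mul]]
      exact Φ.open_target.mem_nhds h1tgt
    have m3 : (fun T : Matrix (Fin n) (Fin n) ℝ => Φ.symm (σ T * T)) ⁻¹' W
        ∈ 𝓝 (1 : Matrix (Fin n) (Fin n) ℝ) := by
      apply cLS.preimage_mem_nhds
      rw [show σ (1 : Matrix (Fin n) (Fin n) ℝ) * 1 = 1 by rw [hone, one_mul], hΦs1]
      exact hWopen.mem_nhds hW0
    have m4 : Pf ⁻¹' N' ∈ 𝓝 (1 : Matrix (Fin n) (Fin n) ℝ) := by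
      apply cPf.preimage_mem_nhds
      rw [hPf1]
      exact hN'open.mem_nhds h1N'
    have m5 : Uf ⁻¹' N' ∈ 𝓝 (1 : Matrix (Fin n) (Fin n) ℝ) := by
      apply cUf.preimage_mem_nhds
      rw [hUf1]
      exact hN'open.mem_nhds h1N'
    filter_upwards [m1, m2, m3, m4, m5] with T h1 h2 h3 h4 h5
    exact ⟨h1, h2, h3, h4, h5⟩
  obtain ⟨N, hNsub, hNopen, h1N⟩ := mem_nhds_iff.mp hmemN
  refine ⟨N, N', hNopen, hN'open, h1N, h1N', fun T hT => (hNsub hT).1, fun T hT => ?_⟩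
  obtain ⟨hTN', hTtgt, hTW, hPfN', hUfN'⟩ := hNsub hT
  have hTunit : IsUnit T := hTN'.2
  -- notation
  set S : Matrix (Fin n) (Fin n) ℝ := σ T * T with hS
  set l : Matrix (Fin n) (Fin n) ℝ := Φ.symm S with hl
  set P : Matrix (Fin n) (Fin n) ℝ := Pf T with hP
  have hPval : P = NormedSpace.exp ((2⁻¹ : ℝ) • l) := rfl
  have hσS : σ S = S := by
    rw [hS, hmul, hinvol]
  have hexpl : NormedSpace.exp l = S := by
    have := Φ.right_inv hTtgt
    rwa [hΦcoe] at this
  have hσl : σ l = l := by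
    apply Φ.injOn hTW.2 hTW.1
    rw [hΦcoe]
    show NormedSpace.exp (σ l) = NormedSpace.exp l
    rw [← hσexp, hexpl, hσS]
  have hhalf : (2⁻¹ : ℝ) • l + (2⁻¹ : ℝ) • l = l := by
    rw [← add_smul]
    norm_num
  have hP2 : P * P = S := by
    calc P * P = NormedSpace.exp ((2⁻¹ : ℝ) • l) * NormedSpace.exp ((2⁻¹ : ℝ) • l) := by
          rw [hPval]
      _ = NormedSpace.exp ((2⁻¹ : ℝ) • l + (2⁻¹ : ℝ) • l) :=
          (NormedSpace.exp_add_of_commute (Commute.refl _)).symm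
      _ = S := by rw [hhalf, hexpl]
  have hσP : σ P = P := by
    rw [hPval, hσexp, map_smul, hσl]
  have hPunit : IsUnit P := NormedSpace.isUnit_exp _
  set Pi : Matrix (Fin n) (Fin n) ℝ := Ring.inverse P with hPi
  have hPPi : P * Pi = 1 := Ring.mul_inverse_cancel P hPunit
  have hPiP : Pi * P = 1 := Ring.inverse_mul_cancel P hPunit
  have hσPi : σ Pi = Pi := by
    have h1 : σ Pi * P = 1 := by
      have := hmul P Pi
      rw [hPPi, hone, hσP] at this
      exact this.symm
    calc σ Pi = σ Pi * (P * Pi) := by rw [hPPi, mul_one]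
      _ = (σ Pi * P) * Pi := by rw [mul_assoc]
      _ = Pi := by rw [h1, one_mul]
  set U : Matrix (Fin n) (Fin n) ℝ := Uf T with hU
  have hUval : U = T * Pi := rfl
  have hσU : σ U = Pi * σ T := by
    rw [hUval, hmul, hσPi]
  have hσUU : σ U * U = 1 := by
    rw [hσU, hUval]
    calc Pi * σ T * (T * Pi) = Pi * (σ T * T) * Pi := by rw [mul_assoc, mul_assoc, mul_assoc]
      _ = Pi * (P * P) * Pi := by rw [← hS, ← hP2]
      _ = (Pi * P) * (P * Pi) := by rw [mul_assoc, mul_assoc, mul_assoc]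
      _ = 1 := by rw [hPiP, hPPi, one_mul]
  have hUσU : U * σ U = 1 := mul_eq_one_comm.mp hσUU
  have hUunit : IsUnit U := hUfN'.2
  have hTUP : T = U * P := by
    rw [hUval, mul_assoc, hPiP, mul_one]
  refine ⟨hTunit, ⟨(U, P), ⟨hUfN', hPfN', hUunit, hσUU, hUσU, hσP, hTUP⟩, ?_⟩⟩
  rintro ⟨U', P'⟩ ⟨hU'N', hP'N', hU'unit, hσU'U', hU'σU', hσP', hTeq'⟩
  simp only at hU'N' hP'N' hU'unit hσU'U' hU'σU' hσP' hTeq'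
  -- P' * P' = S
  have hP'2 : P' * P' = S := by
    rw [hS, hTeq', hmul, hσP']
    symm
    calc P' * σ U' * (U' * P') = P' * (σ U' * (U' * P')) := by rw [mul_assoc]
      _ = P' * ((σ U' * U') * P') := by rw [← mul_assoc (σ U') U' P']
      _ = P' * (1 * P') := by rw [hσU'U']
      _ = P' * P' := by rw [one_mul]
  have hP'P : P' = P := by
    apply Ψ.injOn hP'N'.1 hPfN'.1
    rw [hΨcoe]
    show P' * P' = P * P
    rw [hP'2, hP2]
  have hU'U : U' = U := by
    have : U' * P = T := by rw [← hP'P, ← hTeq']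
    calc U' = U' * (P * Pi) := by rw [hPPi, mul_one]
      _ = (U' * P) * Pi := by rw [mul_assoc]
      _ = T * Pi := by rw [this]
      _ = U := rfl
  exact Prod.ext hU'U hP'P
end

section
/- Let n be a positive natural number, σ : Matrix n n ℝ → Matrix n n ℝ an ℝ-linear involutive antiautomorphism (σ(AB) = σ(B)σ(A), σ(1) = 1, σ ∘ σ = id), and A : ℝ → Matrix n n ℝ a function satisfying σ(A(t)) = −A(t) for all t. Suppose U : ℝ → Matrix n n ℝ is differentiable with U(0) = 1 and U'(t) = −A(t)·U(t) for all t. Then U(t) is unitary with respect to σ for all t: σ(U(t))·U(t) = 1 and U(t)·σ(U(t)) = 1. -/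
/-- **Parallel transporters generated by a `σ`-antiselfadjoint potential are `σ`-unitary.**
Let `σ` be an `ℝ`-linear involutive antiautomorphism of the real `n × n` matrices
and `A : ℝ → Matrix` a potential with `σ (A t) = -A t`.  If `U` solves the
transport equation `U' t = -(A t) * U t` (entrywise derivatives) with `U 0 = 1`,
then `σ (U t) * U t = 1` and `U t * σ (U t) = 1` for all `t`. -/
theorem stmt6 {n : ℕ} (hn : 0 < n)
    (σ : Matrix (Fin n) (Fin n) ℝ →ₗ[ℝ] Matrix (Fin n) (Fin n) ℝ)
    (hmul : ∀ A B, σ (A * B) = σ B * σ A)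
    (hone : σ 1 = 1)
    (hinvol : ∀ A, σ (σ A) = A)
    (A U : ℝ → Matrix (Fin n) (Fin n) ℝ)
    (hA : ∀ t, σ (A t) = -(A t))
    (hU0 : U 0 = 1)
    (hU : ∀ (t : ℝ) (i j : Fin n),
      HasDerivAt (fun s => U s i j) ((-(A t * U t)) i j) t) :
    ∀ t, σ (U t) * U t = 1 ∧ U t * σ (U t) = 1 := by
  -- entrywise representation of σ as a linear combination of matrix entries
  have hrep : ∀ (M : Matrix (Fin n) (Fin n) ℝ) (i j : Fin n),
      σ M i j = ∑ p : Fin n × Fin n,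
        M p.1 p.2 * σ (Matrix.single p.1 p.2 1) i j := by
    intro M i j
    conv_lhs => rw [Matrix.matrix_eq_sum_single M]
    rw [← Finset.sum_product']
    rw [map_sum]
    rw [Matrix.sum_apply]
    refine Finset.sum_congr rfl fun p _ => ?_
    have : Matrix.single p.1 p.2 (M p.1 p.2)
        = M p.1 p.2 • Matrix.single p.1 p.2 (1 : ℝ) := by
      rw [Matrix.smul_single, smul_eq_mul, mul_one]
    rw [this, map_smul]
    simp [Matrix.smul_apply]
  -- derivative of σ ∘ U, entrywise
  have hV : ∀ (t : ℝ) (i j : Fin n),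
      HasDerivAt (fun s => σ (U s) i j) ((σ (U t) * A t) i j) t := by
    intro t i j
    have h1 : HasDerivAt (fun s => σ (U s) i j) (σ (-(A t * U t)) i j) t := by
      have hfun : (fun s => σ (U s) i j) = fun s => ∑ p : Fin n × Fin n,
          U s p.1 p.2 * σ (Matrix.single p.1 p.2 1) i j :=
        funext fun s => hrep (U s) i j
      rw [hfun, hrep (-(A t * U t)) i j]
      exact HasDerivAt.fun_sum fun p _ => (hU t p.1 p.2).mul_const _
    have h2 : σ (-(A t * U t)) = σ (U t) * A t := by
      rw [map_neg, hmul, hA]; rw [Matrix.mul_neg, neg_neg]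
    rwa [h2] at h1
  -- σ(U t) * U t is constant
  have hW : ∀ (t : ℝ) (i j : Fin n),
      HasDerivAt (fun s => (σ (U s) * U s) i j) 0 t := by
    intro t i j
    have h : HasDerivAt (fun s => (σ (U s) * U s) i j)
        (∑ k, ((σ (U t) * A t) i k * U t k j
              + σ (U t) i k * (-(A t * U t)) k j)) t := by
      simp only [Matrix.mul_apply]
      exact HasDerivAt.fun_sum fun k _ => (hV t i k).mul (hU t k j)
    have he : (∑ k, ((σ (U t) * A t) i k * U t k j
              + σ (U t) i k * (-(A t * U t)) k j))
        = (σ (U t) * A t * U t + σ (U t) * (-(A t * U t))) i j := by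
      rw [Matrix.add_apply, Matrix.mul_apply, Matrix.mul_apply, ← Finset.sum_add_distrib]
    have hz : σ (U t) * A t * U t + σ (U t) * (-(A t * U t)) = 0 := by
      rw [Matrix.mul_neg, ← Matrix.mul_assoc, add_neg_cancel]
    rw [he, hz] at h
    simpa using h
  have hconst : ∀ t, σ (U t) * U t = 1 := by
    intro t
    ext i j
    have := is_const_of_deriv_eq_zero (f := fun s => (σ (U s) * U s) i j)
      (fun x => (hW x i j).differentiableAt) (fun x => (hW x i j).deriv) t 0
    rw [this, hU0, hone, one_mul]
  intro t
  exact ⟨hconst t, mul_eq_one_comm.mpr (hconst t)⟩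
end

section
/- Let d, n be positive natural numbers. Let S : (Fin d → ℝ) → Matrix n n ℝ be differentiable with S(x) invertible for every x, let B : (Fin d → ℝ) → ((Fin d → ℝ) →L[ℝ] Matrix n n ℝ) be a matrix-valued 1-form, let c : ℝ → (Fin d → ℝ) be a differentiable path, and let T : ℝ → Matrix n n ℝ be differentiable with T'(t) = −(B(c(t))(c'(t)))·T(t) for all t. Define the gauge-transformed potential B^S(x)(v) := S(x)⁻¹·(B(x)(v))·S(x) + S(x)⁻¹·(DS(x)(v)), where DS(x) is the Fréchet derivative of S at x. Then the gauge-transformed transporter T̃(t) := S(c(t))⁻¹·T(t)·S(c(0)) is differentiable and satisfies T̃'(t) = −(B^S(c(t))(c'(t)))·T̃(t) for all t. -/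
attribute [local instance] Matrix.normedAddCommGroup Matrix.normedSpace

section aux

variable {n : ℕ}

local notation "M" => Matrix (Fin n) (Fin n) ℝ

private lemma mul_norm_bound (A B : M) : ‖A * B‖ ≤ ((n : ℝ) + 1) * ‖A‖ * ‖B‖ := by
  rw [Matrix.norm_le_iff (by positivity)]
  intro i j
  calc ‖(A * B) i j‖ = ‖∑ k, A i k * B k j‖ := by rw [Matrix.mul_apply]
    _ ≤ ∑ k, ‖A i k * B k j‖ := norm_sum_le _ _
    _ ≤ ∑ _k : Fin n, ‖A‖ * ‖B‖ := by
        refine Finset.sum_le_sum fun k _ => ?_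
        rw [norm_mul]
        exact mul_le_mul (Matrix.norm_entry_le_entrywise_sup_norm A)
          (Matrix.norm_entry_le_entrywise_sup_norm B) (norm_nonneg _)
          (norm_nonneg _)
    _ = (n : ℝ) * (‖A‖ * ‖B‖) := by simp [mul_assoc]
    _ ≤ ((n : ℝ) + 1) * ‖A‖ * ‖B‖ := by nlinarith [norm_nonneg A, norm_nonneg B]

private lemma isBBM_mul : IsBoundedBilinearMap ℝ (fun p : M × M => p.1 * p.2) where
  add_left := fun A A' B => add_mul A A' B
  smul_left := fun r A B => smul_mul_assoc r A B
  add_right := fun A B B' => mul_add A B B'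
  smul_right := fun r A B => mul_smul_comm r A B
  bound := ⟨(n : ℝ) + 1, by positivity, mul_norm_bound⟩

private lemma hasDerivAt_mul' {f g : ℝ → M} {f' g' : M} {t : ℝ}
    (hf : HasDerivAt f f' t) (hg : HasDerivAt g g' t) :
    HasDerivAt (fun s => f s * g s) (f' * g t + f t * g') t := by
  have h := (isBBM_mul.hasFDerivAt (f t, g t)).comp_hasDerivAt t (hf.prodMk hg)
  rw [add_comm]
  simp at h
  exact h

private lemma entry_diff {f : ℝ → M} (hf : Differentiable ℝ f) (i j : Fin n) :
    Differentiable ℝ fun s => f s i j := by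
  have h1 : Differentiable ℝ fun s => f s i :=
    (ContinuousLinearMap.proj (R := ℝ) (φ := fun _ : Fin n => Fin n → ℝ) i).differentiable.comp hf
  exact (ContinuousLinearMap.proj (R := ℝ) (φ := fun _ : Fin n => ℝ) j).differentiable.comp h1

private lemma det_diff {f : ℝ → M} (hf : ∀ i j, Differentiable ℝ fun s => f s i j) :
    Differentiable ℝ fun s => (f s).det := by
  simp only [Matrix.det_apply']
  refine Differentiable.fun_sum fun σ _ => Differentiable.const_mul ?_ _
  exact Differentiable.fun_finset_prod fun i _ => hf (σ i) i

private lemma inv_diff {f : ℝ → M} (hf : Differentiable ℝ f)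
    (hunit : ∀ s, IsUnit (f s)) : Differentiable ℝ fun s => (f s)⁻¹ := by
  have hentry := entry_diff hf
  have hdet : Differentiable ℝ fun s => (f s).det := det_diff hentry
  have hadj : ∀ i j, Differentiable ℝ fun s => (f s).adjugate i j := by
    intro i j
    simp only [Matrix.adjugate_apply]
    refine det_diff fun k l => ?_
    simp only [Matrix.updateRow_apply]
    by_cases h : k = j <;> simp [h, hentry k l, differentiable_const]
  have key : (fun s => (f s)⁻¹)
      = fun s => ((f s).det)⁻¹ • (f s).adjugate := by
    funext s
    rw [Matrix.inv_def, Ring.inverse_eq_inv']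
  rw [key]
  have hdetne : ∀ s, (f s).det ≠ 0 := fun s =>
    ((Matrix.isUnit_iff_isUnit_det (f s)).1 (hunit s)).ne_zero
  exact (hdet.inv hdetne).smul
    (differentiable_pi.2 fun i => differentiable_pi.2 fun j => hadj i j)

end aux

/-- **Gauge transformation law for parallel transporters.**
Let `S` be a differentiable field of invertible `n × n` matrices on `ℝ^d`,
`B` a matrix-valued 1-form, `c` a differentiable path and `T` a solution of the
transport equation `T' t = -(B (c t) (c' t)) * T t`.  Then the gauge-transformed
transporter `T̃ t = (S (c t))⁻¹ * T t * S (c 0)` solves the transport equation for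
the gauge-transformed potential
`B^S x v = (S x)⁻¹ * B x v * S x + (S x)⁻¹ * (DS x v)`. -/
theorem stmt8 {d n : ℕ} (hd : 0 < d) (hn : 0 < n)
    (S : (Fin d → ℝ) → Matrix (Fin n) (Fin n) ℝ)
    (hS : Differentiable ℝ S) (hSinv : ∀ x, IsUnit (S x))
    (B : (Fin d → ℝ) → ((Fin d → ℝ) →L[ℝ] Matrix (Fin n) (Fin n) ℝ))
    (c : ℝ → (Fin d → ℝ)) (hc : Differentiable ℝ c)
    (T : ℝ → Matrix (Fin n) (Fin n) ℝ)
    (hT : ∀ t, HasDerivAt T (-(B (c t) (deriv c t) * T t)) t) :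
    ∀ t, HasDerivAt (fun s => (S (c s))⁻¹ * T s * S (c 0))
      (-(((S (c t))⁻¹ * (B (c t) (deriv c t)) * S (c t)
            + (S (c t))⁻¹ * (fderiv ℝ S (c t) (deriv c t)))
          * ((S (c t))⁻¹ * T t * S (c 0)))) t := by
  intro t
  have hdetU : ∀ s : ℝ, IsUnit (S (c s)).det := fun s =>
    (Matrix.isUnit_iff_isUnit_det _).1 (hSinv (c s))
  have hV : Differentiable ℝ fun s => (S (c s))⁻¹ :=
    inv_diff (hS.comp hc) fun s => hSinv (c s)
  have hU' : HasDerivAt (fun s => S (c s)) (fderiv ℝ S (c t) (deriv c t)) t :=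
    (hS (c t)).hasFDerivAt.comp_hasDerivAt t (hc t).hasDerivAt
  have hVd : HasDerivAt (fun s => (S (c s))⁻¹)
      (deriv (fun s => (S (c s))⁻¹) t) t := (hV t).hasDerivAt
  set V' := deriv (fun s => (S (c s))⁻¹) t with hV'def
  have hUV : ∀ s : ℝ, S (c s) * (S (c s))⁻¹ = 1 := fun s =>
    Matrix.mul_nonsing_inv _ (hdetU s)
  have h0 : HasDerivAt (fun s => S (c s) * (S (c s))⁻¹)
      (fderiv ℝ S (c t) (deriv c t) * (S (c t))⁻¹ + S (c t) * V') t :=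
    hasDerivAt_mul' hU' hVd
  have h0' : (fun s => S (c s) * (S (c s))⁻¹) = fun _ => (1 : Matrix (Fin n) (Fin n) ℝ) :=
    funext hUV
  rw [h0'] at h0
  have hz : fderiv ℝ S (c t) (deriv c t) * (S (c t))⁻¹ + S (c t) * V' = 0 :=
    h0.unique (hasDerivAt_const t 1)
  have h2 : S (c t) * V' = -(fderiv ℝ S (c t) (deriv c t) * (S (c t))⁻¹) :=
    eq_neg_of_add_eq_zero_right hz
  have hV'eq : V' = -((S (c t))⁻¹ * fderiv ℝ S (c t) (deriv c t) * (S (c t))⁻¹) := by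
    calc V' = ((S (c t))⁻¹ * S (c t)) * V' := by
          rw [Matrix.nonsing_inv_mul _ (hdetU t), one_mul]
      _ = (S (c t))⁻¹ * (S (c t) * V') := by rw [mul_assoc]
      _ = (S (c t))⁻¹ * (-(fderiv ℝ S (c t) (deriv c t) * (S (c t))⁻¹)) := by rw [h2]
      _ = -((S (c t))⁻¹ * fderiv ℝ S (c t) (deriv c t) * (S (c t))⁻¹) := by
          noncomm_ring
  rw [hV'eq] at hVd
  have hfin := hasDerivAt_mul' (hasDerivAt_mul' hVd (hT t)) (hasDerivAt_const t (S (c 0)))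
  convert hfin using 1
  have expand : -(((S (c t))⁻¹ * (B (c t) (deriv c t)) * S (c t)
        + (S (c t))⁻¹ * (fderiv ℝ S (c t) (deriv c t)))
      * ((S (c t))⁻¹ * T t * S (c 0)))
      = -((S (c t))⁻¹ * (B (c t) (deriv c t)) * (S (c t) * (S (c t))⁻¹) * (T t * S (c 0)))
        - (S (c t))⁻¹ * (fderiv ℝ S (c t) (deriv c t))
          * ((S (c t))⁻¹ * T t * S (c 0)) := by noncomm_ring
  rw [expand, hUV t]
  noncomm_ring
end

section
/- Let M be a vector space over ℝ, Q a quadratic form on M, and ι : M → CliffordAlgebra Q the canonical embedding. Let L be the real linear span of the set {ι(v) : v ∈ M} ∪ {ι(v)·ι(w) − ι(w)·ι(v) : v, w ∈ M} inside CliffordAlgebra Q. Then L is closed under the commutator bracket: for all x, y ∈ L, x·y − y·x ∈ L. (In particular, L is a real Lie subalgebra of the Clifford algebra under the commutator; for Q of signature (1,3) this is the de Sitter Lie algebra containing the vierbein part spanned by ι(M) and the spin-connection part spanned by commutators.) -/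
open CliffordAlgebra in
private lemma stmt12_key {M : Type*} [AddCommGroup M] [Module ℝ M] (Q : QuadraticForm ℝ M)
    (a b c : M) :
    ι Q a * (ι Q b * ι Q c - ι Q c * ι Q b) - (ι Q b * ι Q c - ι Q c * ι Q b) * ι Q a
      = (2 * QuadraticMap.polar Q a b) • ι Q c - (2 * QuadraticMap.polar Q a c) • ι Q b := by
  have h : ι Q a * (ι Q b * ι Q c - ι Q c * ι Q b) - (ι Q b * ι Q c - ι Q c * ι Q b) * ι Q a
      = (ι Q a * ι Q b + ι Q b * ι Q a) * ι Q c - ι Q b * (ι Q a * ι Q c + ι Q c * ι Q a)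
        - ((ι Q a * ι Q c + ι Q c * ι Q a) * ι Q b - ι Q c * (ι Q a * ι Q b + ι Q b * ι Q a)) := by
    noncomm_ring
  rw [h, ι_mul_ι_add_swap a b, ι_mul_ι_add_swap a c]
  simp only [Algebra.smul_def, map_mul, map_ofNat]
  rw [← Algebra.commutes (QuadraticMap.polar Q a c) (ι Q b),
      ← Algebra.commutes (QuadraticMap.polar Q a b) (ι Q c)]
  noncomm_ring

/-- **The de Sitter Lie algebra inside the Clifford algebra.**
Let `Q` be a quadratic form on a real vector space `M` with canonical embedding
`ι : M → CliffordAlgebra Q`, and let `L` be the real span of the generators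
`ι v` together with the commutators `ι v * ι w - ι w * ι v`.  Then `L` is closed
under the commutator bracket: for `x, y ∈ L` one has `x * y - y * x ∈ L`. -/
theorem stmt12 {M : Type*} [AddCommGroup M] [Module ℝ M] (Q : QuadraticForm ℝ M)
    (L : Submodule ℝ (CliffordAlgebra Q))
    (hL : L = Submodule.span ℝ
      ({x | ∃ v : M, x = CliffordAlgebra.ι Q v} ∪
       {x | ∃ v w : M, x = CliffordAlgebra.ι Q v * CliffordAlgebra.ι Q w
          - CliffordAlgebra.ι Q w * CliffordAlgebra.ι Q v})) :
    ∀ x ∈ L, ∀ y ∈ L, x * y - y * x ∈ L := by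
  subst hL
  set ι := CliffordAlgebra.ι Q with hι
  set S : Set (CliffordAlgebra Q) :=
    ({x | ∃ v : M, x = ι v} ∪
     {x | ∃ v w : M, x = ι v * ι w - ι w * ι v}) with hS
  set V : Submodule ℝ (CliffordAlgebra Q) := Submodule.span ℝ {x | ∃ v : M, x = ι v} with hV
  have hVL : V ≤ Submodule.span ℝ S :=
    Submodule.span_mono Set.subset_union_left
  -- brackets of elements of V with vectors land in the span
  have brkV : ∀ z ∈ V, ∀ e : M, z * ι e - ι e * z ∈ Submodule.span ℝ S := by
    intro z hz e
    induction hz using Submodule.span_induction with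
    | mem x hx =>
      obtain ⟨u, rfl⟩ := hx
      exact Submodule.subset_span (Or.inr ⟨u, e, rfl⟩)
    | zero => simpa using Submodule.zero_mem _
    | add x y hx hy ihx ihy =>
      have : (x + y) * ι e - ι e * (x + y) = (x * ι e - ι e * x) + (y * ι e - ι e * y) := by
        noncomm_ring
      rw [this]; exact Submodule.add_mem _ ihx ihy
    | smul r x hx ihx =>
      have : (r • x) * ι e - ι e * (r • x) = r • (x * ι e - ι e * x) := by
        rw [smul_mul_assoc, mul_smul_comm, smul_sub]
      rw [this]; exact Submodule.smul_mem _ _ ihx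
  -- bracket of a vector with a commutator generator lies in V
  have brkComm : ∀ a b c : M,
      ι a * (ι b * ι c - ι c * ι b) - (ι b * ι c - ι c * ι b) * ι a ∈ V := by
    intro a b c
    rw [hι, stmt12_key]
    exact Submodule.sub_mem _
      (Submodule.smul_mem _ _ (Submodule.subset_span ⟨c, rfl⟩))
      (Submodule.smul_mem _ _ (Submodule.subset_span ⟨b, rfl⟩))
  intro x hx y hy
  induction hx using Submodule.span_induction with
  | mem x hxS =>
    induction hy using Submodule.span_induction with
    | mem y hyS =>
      rcases hxS with ⟨v, rfl⟩ | ⟨v, w, rfl⟩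
      · rcases hyS with ⟨v', rfl⟩ | ⟨b, c, rfl⟩
        · exact Submodule.subset_span (Or.inr ⟨v, v', rfl⟩)
        · exact hVL (brkComm v b c)
      · rcases hyS with ⟨a, rfl⟩ | ⟨d, e, rfl⟩
        · -- commutator * vector
          have : (ι v * ι w - ι w * ι v) * ι a - ι a * (ι v * ι w - ι w * ι v)
              = -(ι a * (ι v * ι w - ι w * ι v) - (ι v * ι w - ι w * ι v) * ι a) := by
            noncomm_ring
          rw [this]
          exact Submodule.neg_mem _ (hVL (brkComm a v w))
        · -- commutator * commutator : Jacobi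
          set x := ι v * ι w - ι w * ι v with hx
          have jac : x * (ι d * ι e - ι e * ι d) - (ι d * ι e - ι e * ι d) * x
              = ((x * ι d - ι d * x) * ι e - ι e * (x * ι d - ι d * x))
                + (ι d * (x * ι e - ι e * x) - (x * ι e - ι e * x) * ι d) := by
            noncomm_ring
          rw [jac]
          have hxd : x * ι d - ι d * x ∈ V := by
            have : x * ι d - ι d * x = -(ι d * x - x * ι d) := by noncomm_ring
            rw [this]; exact Submodule.neg_mem _ (brkComm d v w)
          have hxe : x * ι e - ι e * x ∈ V := by
            have : x * ι e - ι e * x = -(ι e * x - x * ι e) := by noncomm_ring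
            rw [this]; exact Submodule.neg_mem _ (brkComm e v w)
          refine Submodule.add_mem _ (brkV _ hxd e) ?_
          have : ι d * (x * ι e - ι e * x) - (x * ι e - ι e * x) * ι d
              = -((x * ι e - ι e * x) * ι d - ι d * (x * ι e - ι e * x)) := by noncomm_ring
          rw [this]
          exact Submodule.neg_mem _ (brkV _ hxe d)
    | zero => simpa using Submodule.zero_mem _
    | add y z hy hz ihy ihz =>
      have : x * (y + z) - (y + z) * x = (x * y - y * x) + (x * z - z * x) := by noncomm_ring
      rw [this]; exact Submodule.add_mem _ ihy ihz
    | smul r y hy ihy =>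
      have : x * (r • y) - (r • y) * x = r • (x * y - y * x) := by
        rw [mul_smul_comm, smul_mul_assoc, smul_sub]
      rw [this]; exact Submodule.smul_mem _ _ ihy
  | zero => simpa using Submodule.zero_mem _
  | add x z hx hz ihx ihz =>
    have : (x + z) * y - y * (x + z) = (x * y - y * x) + (z * y - y * z) := by noncomm_ring
    rw [this]; exact Submodule.add_mem _ ihx ihz
  | smul r x hx ihx =>
    have : (r • x) * y - y * (r • x) = r • (x * y - y * x) := by
      rw [smul_mul_assoc, mul_smul_comm, smul_sub]
    rw [this]; exact Submodule.smul_mem _ _ ihx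
end

section
/- Define the 2×2 complex matrices σ₀ = identity, σ₁ = !![0,1; 1,0], σ₂ = !![0,−i; i,0], σ₃ = !![1,0; 0,−1], σ̃₀ = σ₀, σ̃ₖ = −σₖ for k = 1,2,3, and ε = !![0,1; −1,0]. Let C : ℂ² → ℂ² be the ℝ-linear map of componentwise complex conjugation, and define the ℝ-linear maps ρ_α : ℂ² → ℂ² by ρ_α(ψ) := (σ_α·ε)·C(ψ) for α ∈ {0,1,2,3}. Then for all α, β ∈ {0,1,2,3} the commutator of real-linear maps satisfies ρ_α ∘ ρ_β − ρ_β ∘ ρ_α = −L(σ_α·σ̃_β − σ_β·σ̃_α), where L(M) denotes the ℝ-linear map ψ ↦ M·ψ given by matrix multiplication. -/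
open Matrix

/-- The Pauli matrices `σ₀ = 1, σ₁, σ₂, σ₃`. -/
def pauli : Fin 4 → Matrix (Fin 2) (Fin 2) ℂ
  | 0 => 1
  | 1 => !![0, 1; 1, 0]
  | 2 => !![0, -Complex.I; Complex.I, 0]
  | 3 => !![1, 0; 0, -1]

/-- The dual Pauli matrices `σ̃₀ = σ₀`, `σ̃ₖ = -σₖ`. -/
def pauliTilde : Fin 4 → Matrix (Fin 2) (Fin 2) ℂ
  | 0 => 1
  | 1 => -!![0, 1; 1, 0]
  | 2 => -!![0, -Complex.I; Complex.I, 0]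
  | 3 => -!![1, 0; 0, -1]

/-- The antisymmetric `2 × 2` matrix `ε`. -/
def epsMat : Matrix (Fin 2) (Fin 2) ℂ := !![0, 1; -1, 0]

/-- Componentwise complex conjugation `C : ℂ² → ℂ²` as a real-linear map. -/
noncomputable def conjC : (Fin 2 → ℂ) →ₗ[ℝ] (Fin 2 → ℂ) :=
  LinearMap.pi fun i =>
    Complex.conjAe.toLinearMap.comp (LinearMap.proj i : (Fin 2 → ℂ) →ₗ[ℝ] ℂ)

/-- Left multiplication by a `2 × 2` complex matrix, viewed as a real-linear map on `ℂ²`. -/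
noncomputable def matL (M : Matrix (Fin 2) (Fin 2) ℂ) : (Fin 2 → ℂ) →ₗ[ℝ] (Fin 2 → ℂ) :=
  (Matrix.mulVecLin M).restrictScalars ℝ

/-- The real-linear maps `ρ_α (ψ) = (σ_α * ε) * C ψ` on Weyl spinors. -/
noncomputable def rho (α : Fin 4) : (Fin 2 → ℂ) →ₗ[ℝ] (Fin 2 → ℂ) :=
  (matL (pauli α * epsMat)).comp conjC

lemma matL_comp_conj (A B : Matrix (Fin 2) (Fin 2) ℂ) :
    ((matL A).comp conjC) ∘ₗ ((matL B).comp conjC)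
      = matL (A * B.map (starRingEnd ℂ)) := by
  apply LinearMap.ext
  intro ψ
  funext i
  simp only [LinearMap.comp_apply, matL, conjC, LinearMap.restrictScalars_apply,
    Matrix.mulVecLin_apply, LinearMap.pi_apply, AlgEquiv.toLinearMap_apply,
    LinearMap.proj_apply, Complex.conjAe_coe, mulVec, dotProduct,
    Fin.sum_univ_two, Matrix.mul_apply, Matrix.map_apply, map_add, _root_.map_mul,
    Complex.conj_conj]
  ring

lemma matL_sub (A B : Matrix (Fin 2) (Fin 2) ℂ) :
    matL A - matL B = matL (A - B) := by
  apply LinearMap.ext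
  intro ψ
  simp [matL, Matrix.sub_mulVec]

lemma map_fin_two (f : ℂ → ℂ) (a b c d : ℂ) :
    (!![a, b; c, d]).map f = !![f a, f b; f c, f d] := by
  ext i j
  fin_cases i <;> fin_cases j <;> simp

/-- **Commutation relations of the anti-de Sitter generators on Weyl spinors.**
For all `α, β ∈ {0,1,2,3}`:
`ρ_α ∘ ρ_β - ρ_β ∘ ρ_α = -L(σ_α σ̃_β - σ_β σ̃_α)`. -/
theorem stmt14 (α β : Fin 4) :
    rho α ∘ₗ rho β - rho β ∘ₗ rho α
      = -matL (pauli α * pauliTilde β - pauli β * pauliTilde α) := by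
  rw [rho, rho, matL_comp_conj, matL_comp_conj, matL_sub]
  have : -matL (pauli α * pauliTilde β - pauli β * pauliTilde α)
      = matL (-(pauli α * pauliTilde β - pauli β * pauliTilde α)) := by
    apply LinearMap.ext; intro ψ; simp only [matL, LinearMap.neg_apply, LinearMap.restrictScalars_apply,
      Matrix.mulVecLin_apply, ← Matrix.neg_mulVec, neg_sub]
  rw [this]
  congr 1
  fin_cases α <;> fin_cases β <;>
    simp [pauli, pauliTilde, epsMat, map_fin_two, Matrix.one_fin_two,
      Matrix.mul_fin_two, Complex.ext_iff] <;>
    ring_nf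
end
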